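/- arXiv:2408.14225 — 2 statements merged into one kernel-verified Lean document; each statement's English description precedes it below -/
import Mathlib

section
/- Let P ⊂ ℝ^d be a finite set of size n ≥ 1, let k ≥ 1, let α' ≥ 1, and let B ⊂ ℝ^d be a finite nonempty set satisfying ∑_{p∈P} min_{c∈B} ‖p−c‖₂ ≤ α'·inf_{C'⊂ℝ^d, |C'|=k} ∑_{p∈P} min_{c∈C'} ‖p−c‖₂. Then, for every nearest-point partitions used to compute the relaxed losses, ℓ̃(P,B) ≤ α'·log₂²(n+1)·inf_{C'⊂ℝ^d, |C'|=k} ℓ̃(P,C'). In particular, a set achieving an O(log k)-approximation for k-median is an O(log(k)·log²(n))-approximation for the relaxed fitting loss. -/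
open scoped Classical

/-- `Part` is a nearest-point partition of `P` with respect to the centers `C`. -/
def IsNearPartition {d : ℕ} (P C : Finset (EuclideanSpace ℝ (Fin d)))
    (Part : EuclideanSpace ℝ (Fin d) → Finset (EuclideanSpace ℝ (Fin d))) : Prop :=
  (∀ c ∈ C, Part c ⊆ P) ∧
  (∀ p ∈ P, ∃ c ∈ C, p ∈ Part c) ∧
  (∀ c ∈ C, ∀ c' ∈ C, c ≠ c' → Disjoint (Part c) (Part c')) ∧
  (∀ c ∈ C, ∀ p ∈ Part c, ∀ c' ∈ C, ‖p - c‖ ≤ ‖p - c'‖)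

/-- The relaxed fitting loss `ℓ̃(P,C) = ∑_{c∈C} (1/log₂²(|P_c|+1)) ∑_{p∈P_c} ‖p−c‖₂`. -/
noncomputable def relLoss {d : ℕ} (C : Finset (EuclideanSpace ℝ (Fin d)))
    (Part : EuclideanSpace ℝ (Fin d) → Finset (EuclideanSpace ℝ (Fin d))) : ℝ :=
  ∑ c ∈ C, (1 / (Real.logb 2 ((Part c).card + 1)) ^ 2) * ∑ p ∈ Part c, ‖p - c‖

lemma sum_part {d : ℕ} (P C : Finset (EuclideanSpace ℝ (Fin d))) (hC : C.Nonempty)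
    (Part : EuclideanSpace ℝ (Fin d) → Finset (EuclideanSpace ℝ (Fin d)))
    (h : IsNearPartition P C Part) :
    ∑ c ∈ C, ∑ p ∈ Part c, ‖p - c‖ = ∑ p ∈ P, C.inf' hC (fun c => ‖p - c‖) := by
  obtain ⟨hsub, hcov, hdisj, hnear⟩ := h
  have hbu : C.biUnion Part = P := by
    ext p
    simp only [Finset.mem_biUnion]
    constructor
    · rintro ⟨c, hc, hp⟩; exact hsub c hc hp
    · exact hcov p
  have key : ∀ c ∈ C, ∀ p ∈ Part c, ‖p - c‖ = C.inf' hC (fun c' => ‖p - c'‖) := by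
    intro c hc p hp
    refine le_antisymm ?_ (Finset.inf'_le _ hc)
    exact Finset.le_inf' _ _ (fun c' hc' => hnear c hc p hp c' hc')
  calc ∑ c ∈ C, ∑ p ∈ Part c, ‖p - c‖
      = ∑ c ∈ C, ∑ p ∈ Part c, C.inf' hC (fun c' => ‖p - c'‖) :=
        Finset.sum_congr rfl (fun c hc => Finset.sum_congr rfl (key c hc))
    _ = ∑ p ∈ C.biUnion Part, C.inf' hC (fun c' => ‖p - c'‖) :=
        (Finset.sum_biUnion (fun c hc c' hc' hne => hdisj c hc c' hc' hne)).symm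
    _ = ∑ p ∈ P, C.inf' hC (fun c => ‖p - c‖) := by rw [hbu]

lemma logb_ge_one (m : ℕ) (hm : 1 ≤ m) : 1 ≤ Real.logb 2 ((m : ℝ) + 1) := by
  have : (2 : ℝ) ≤ (m : ℝ) + 1 := by
    have : (1 : ℝ) ≤ (m : ℝ) := by exact_mod_cast hm
    linarith
  calc (1 : ℝ) = Real.logb 2 2 := (Real.logb_self_eq_one (by norm_num)).symm
    _ ≤ Real.logb 2 ((m : ℝ) + 1) := Real.logb_le_logb_of_le (by norm_num) (by norm_num) this


/-- If `B` is an `α'`-approximation for the `k`-median objective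
(sum of nearest-center distances) on `P`, then, for every nearest-point partitions,
`ℓ̃(P,B) ≤ α'·log₂²(n+1)·ℓ̃(P,C')` for every `k`-element set `C'`. -/
theorem stmt_8 {d k : ℕ} (hk : 1 ≤ k) (P : Finset (EuclideanSpace ℝ (Fin d)))
    (hP : P.Nonempty) (α' : ℝ) (hα : 1 ≤ α')
    (B : Finset (EuclideanSpace ℝ (Fin d))) (hB : B.Nonempty)
    (hmed : ∀ (C' : Finset (EuclideanSpace ℝ (Fin d))) (hC' : C'.Nonempty),
      C'.card = k →
        ∑ p ∈ P, (B.inf' hB fun c => ‖p - c‖) ≤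
          α' * ∑ p ∈ P, (C'.inf' hC' fun c => ‖p - c‖)) :
    ∀ PartB : EuclideanSpace ℝ (Fin d) → Finset (EuclideanSpace ℝ (Fin d)),
      IsNearPartition P B PartB →
        ∀ C' : Finset (EuclideanSpace ℝ (Fin d)), C'.card = k →
          ∀ PartC' : EuclideanSpace ℝ (Fin d) → Finset (EuclideanSpace ℝ (Fin d)),
            IsNearPartition P C' PartC' →
              relLoss B PartB ≤
                α' * (Real.logb 2 ((P.card : ℝ) + 1)) ^ 2 * relLoss C' PartC' := by
  intro PartB hPB C' hCk PartC' hPC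
  have hC' : C'.Nonempty := Finset.card_pos.mp (hCk ▸ hk)
  set L : ℝ := Real.logb 2 ((P.card : ℝ) + 1) with hL
  have hL1 : 1 ≤ L := logb_ge_one P.card (Finset.card_pos.mpr hP)
  -- Step 1
  have step1 : relLoss B PartB ≤ ∑ c ∈ B, ∑ p ∈ PartB c, ‖p - c‖ := by
    refine Finset.sum_le_sum (fun c hc => ?_)
    have hS : (0 : ℝ) ≤ ∑ p ∈ PartB c, ‖p - c‖ :=
      Finset.sum_nonneg (fun p _ => norm_nonneg _)
    rcases Nat.eq_zero_or_pos (PartB c).card with h0 | h1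
    · have : PartB c = ∅ := Finset.card_eq_zero.mp h0
      simp [this]
    · have hl : 1 ≤ Real.logb 2 (((PartB c).card : ℝ) + 1) := logb_ge_one _ h1
      have : 1 / (Real.logb 2 (((PartB c).card : ℝ) + 1)) ^ 2 ≤ 1 := by
        rw [div_le_one (by positivity)]
        nlinarith
      nlinarith
  -- Step 2
  have step2 : ∑ p ∈ P, (B.inf' hB fun c => ‖p - c‖) ≤
      α' * ∑ p ∈ P, (C'.inf' hC' fun c => ‖p - c‖) := hmed C' hC' hCk
  -- Step 3
  have step3 : ∑ c ∈ C', ∑ p ∈ PartC' c, ‖p - c‖ ≤ L ^ 2 * relLoss C' PartC' := by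
    rw [relLoss, Finset.mul_sum]
    refine Finset.sum_le_sum (fun c hc => ?_)
    have hS : (0 : ℝ) ≤ ∑ p ∈ PartC' c, ‖p - c‖ :=
      Finset.sum_nonneg (fun p _ => norm_nonneg _)
    rcases Nat.eq_zero_or_pos (PartC' c).card with h0 | h1
    · have : PartC' c = ∅ := Finset.card_eq_zero.mp h0
      simp [this]
    · have hl : 1 ≤ Real.logb 2 (((PartC' c).card : ℝ) + 1) := logb_ge_one _ h1
      have hle : Real.logb 2 (((PartC' c).card : ℝ) + 1) ≤ L := by
        refine Real.logb_le_logb_of_le (by norm_num) (by positivity) ?_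
        have : (PartC' c).card ≤ P.card :=
          Finset.card_le_card (hPC.1 c hc)
        have : ((PartC' c).card : ℝ) ≤ (P.card : ℝ) := by exact_mod_cast this
        linarith
      rw [mul_comm (L ^ 2), mul_assoc]
      have h1div : 1 ≤ 1 / (Real.logb 2 (((PartC' c).card : ℝ) + 1)) ^ 2 * L ^ 2 := by
        rw [div_mul_eq_mul_div, one_mul, le_div_iff₀ (by positivity), one_mul]
        nlinarith
      nlinarith
  calc relLoss B PartB ≤ ∑ c ∈ B, ∑ p ∈ PartB c, ‖p - c‖ := step1
    _ = ∑ p ∈ P, (B.inf' hB fun c => ‖p - c‖) := sum_part P B hB PartB hPB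
    _ ≤ α' * ∑ p ∈ P, (C'.inf' hC' fun c => ‖p - c‖) := step2
    _ = α' * ∑ c ∈ C', ∑ p ∈ PartC' c, ‖p - c‖ := by
        rw [sum_part P C' hC' PartC' hPC]
    _ ≤ α' * (L ^ 2 * relLoss C' PartC') := by
        refine mul_le_mul_of_nonneg_left step3 (by linarith)
    _ = α' * L ^ 2 * relLoss C' PartC' := by ring
end

section
/- Let P ⊂ ℝ^d be a finite set of size n ≥ 2 and let α ≥ 1. Let B, Q ⊂ ℝ^d be finite nonempty sets with nearest-point partitions {P_c}_{c∈B} and {P'_q}_{q∈Q} of P, respectively. Suppose ℓ̃(P,B) > 0, ℓ̃(P,Q) > 0, and ℓ̃(P,B) ≤ α·ℓ̃(P,Q). Then for every c ∈ B, q ∈ Q, and p ∈ P_c ∩ P'_q: |‖q−p‖₂ − ‖q−c‖₂| / (log₂²(|P'_q|+1)·ℓ̃(P,Q)) ≤ 4·α·log₂²(n) · ‖p−c‖₂ / (log₂²(|P_c|+1)·ℓ̃(P,B)). In words, the sensitivity of each point for the relaxed fitting loss is bounded by 4·α·log₂²(n) times its sensitivity with respect to the approximation B. -/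
open scoped Classical

/-- sensitivity bound. If `ℓ̃(P,B) ≤ α·ℓ̃(P,Q)` (both positive), then for
every `c ∈ B`, `q ∈ Q`, `p ∈ P_c ∩ P'_q`:
`|‖q−p‖−‖q−c‖| / (log₂²(|P'_q|+1)·ℓ̃(P,Q)) ≤
  4·α·log₂²(n) · ‖p−c‖ / (log₂²(|P_c|+1)·ℓ̃(P,B))`. -/
theorem stmt_12 {d : ℕ} (P : Finset (EuclideanSpace ℝ (Fin d))) (h2 : 2 ≤ P.card)
    (α : ℝ) (hα : 1 ≤ α)
    (B Q : Finset (EuclideanSpace ℝ (Fin d))) (hB : B.Nonempty) (hQ : Q.Nonempty)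
    (PartB PartQ : EuclideanSpace ℝ (Fin d) → Finset (EuclideanSpace ℝ (Fin d)))
    (hPB : IsNearPartition P B PartB) (hPQ : IsNearPartition P Q PartQ)
    (hlB : 0 < relLoss B PartB) (hlQ : 0 < relLoss Q PartQ)
    (happrox : relLoss B PartB ≤ α * relLoss Q PartQ) :
    ∀ c ∈ B, ∀ q ∈ Q, ∀ p ∈ PartB c ∩ PartQ q,
      |‖q - p‖ - ‖q - c‖| /
          ((Real.logb 2 ((PartQ q).card + 1)) ^ 2 * relLoss Q PartQ) ≤
        4 * α * (Real.logb 2 (P.card : ℝ)) ^ 2 *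
          (‖p - c‖ / ((Real.logb 2 ((PartB c).card + 1)) ^ 2 * relLoss B PartB)) := by
  intro c hc q hq p hp
  rw [Finset.mem_inter] at hp
  obtain ⟨hpB, hpQ⟩ := hp
  set LB := relLoss B PartB with hLB
  set LQ := relLoss Q PartQ with hLQ
  set gq := Real.logb 2 ((PartQ q).card + 1) with hgqdef
  set gc := Real.logb 2 ((PartB c).card + 1) with hgcdef
  set gn := Real.logb 2 (P.card : ℝ) with hgndef
  have hcardQ : 1 ≤ (PartQ q).card := Finset.card_pos.mpr ⟨p, hpQ⟩
  have hcardB : 1 ≤ (PartB c).card := Finset.card_pos.mpr ⟨p, hpB⟩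
  have hlog2 : Real.logb 2 2 = 1 := Real.logb_self_eq_one (by norm_num)
  have h1q : (1:ℝ) ≤ gq := by
    rw [hgqdef, ← hlog2]
    apply Real.logb_le_logb_of_le (by norm_num) (by norm_num)
    have : (2:ℝ) ≤ ((PartQ q).card : ℝ) + 1 := by exact_mod_cast Nat.succ_le_succ hcardQ
    linarith
  have h1c : (1:ℝ) ≤ gc := by
    rw [hgcdef, ← hlog2]
    apply Real.logb_le_logb_of_le (by norm_num) (by norm_num)
    have : (2:ℝ) ≤ ((PartB c).card : ℝ) + 1 := by exact_mod_cast Nat.succ_le_succ hcardB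
    linarith
  have h1n : (1:ℝ) ≤ gn := by
    rw [hgndef, ← hlog2]
    apply Real.logb_le_logb_of_le (by norm_num) (by norm_num)
    exact_mod_cast h2
  have hcsub : (PartB c).card ≤ P.card := Finset.card_le_card (hPB.1 c hc)
  have hgc2 : gc ≤ 2 * gn := by
    have hle : ((PartB c).card : ℝ) + 1 ≤ (P.card : ℝ) ^ 2 := by
      have : (PartB c).card + 1 ≤ P.card ^ 2 := by nlinarith
      exact_mod_cast this
    calc gc ≤ Real.logb 2 ((P.card : ℝ) ^ 2) := by
          rw [hgcdef]
          exact Real.logb_le_logb_of_le (by norm_num) (by positivity) hle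
      _ = 2 * gn := by rw [hgndef, Real.logb_pow]; norm_num
  have hxpos : 0 < gq ^ 2 * LQ := by positivity
  have hypos : 0 < gc ^ 2 * LB := by positivity
  have key : gc ^ 2 * LB ≤ (4 * α * gn ^ 2) * (gq ^ 2 * LQ) := by
    have hgc4 : gc ^ 2 ≤ 4 * gn ^ 2 := by nlinarith
    have hgq2 : (1:ℝ) ≤ gq ^ 2 := by nlinarith
    nlinarith [mul_le_mul_of_nonneg_left happrox (by positivity : (0:ℝ) ≤ gc ^ 2),
      mul_le_mul_of_nonneg_right hgc4 (le_of_lt (by positivity : (0:ℝ) < α * LQ)),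
      mul_le_mul_of_nonneg_left hgq2 (le_of_lt (by positivity : (0:ℝ) < 4 * α * gn ^ 2 * LQ))]
  have tri : |‖q - p‖ - ‖q - c‖| ≤ ‖p - c‖ := by
    have h := abs_norm_sub_norm_le (q - p) (q - c)
    rw [show q - p - (q - c) = c - p from by abel, norm_sub_rev c p] at h
    exact h
  calc |‖q - p‖ - ‖q - c‖| / (gq ^ 2 * LQ) ≤ ‖p - c‖ / (gq ^ 2 * LQ) := by
        exact div_le_div_of_nonneg_right tri hxpos.le
    _ ≤ 4 * α * gn ^ 2 * (‖p - c‖ / (gc ^ 2 * LB)) := by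
        rw [div_le_iff₀ hxpos,
          show 4 * α * gn ^ 2 * (‖p - c‖ / (gc ^ 2 * LB)) * (gq ^ 2 * LQ)
            = ‖p - c‖ * (4 * α * gn ^ 2 * (gq ^ 2 * LQ)) / (gc ^ 2 * LB) from by ring,
          le_div_iff₀ hypos]
        exact mul_le_mul_of_nonneg_left key (norm_nonneg _)
end
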